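/- arXiv:1506.02929 — 4 statements merged into one kernel-verified Lean document; each statement's English description precedes it below -/
import Mathlib

section
/- Let n, k, ℓ, c be positive integers, let p ∈ [0,1], and set q = cp/ℓ; assume q ≤ 1. Let 𝒞 be any ℓ-rich collection of edge-colored k-uniform hypergraphs on vertex set [n] with colors from [c], and let 𝒞̃ be the collection of uncolored k-uniform hypergraphs obtained from members of 𝒞 by deleting the colors of their edges. Then Pr[H ~ H^k(n,p) contains some member of 𝒞̃ as a subhypergraph] ≤ Pr[H ~ H^k_c(n,q) contains some member of 𝒞 as an edge-colored subhypergraph (both edges and their colors agreeing)]. -/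
open MeasureTheory Filter
open scoped ENNReal

/-- The potential edges of a `k`-uniform hypergraph on vertex set `Fin n`. -/
abbrev HEdge (n k : ℕ) := {e : Finset (Fin n) // e.card = k}

/-- A sample of the colored random hypergraph: each potential edge is either absent
(`none`) or present with a color from `Fin c`. -/
abbrev CSample (n k c : ℕ) := HEdge n k → Option (Fin c)

/-- A sample of the uncolored random hypergraph. -/
abbrev USample (n k : ℕ) := HEdge n k → Bool

/-- Every subset of the (finite) status space of an edge is measurable. -/
instance optionFinMeasurableSpace (c : ℕ) : MeasurableSpace (Option (Fin c)) := ⊤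

/-- The distribution of the status of a single edge: absent with probability `1 - p`,
present with a uniformly random color with probability `p`. -/
noncomputable def edgePMF (c : ℕ) (p : ℝ≥0∞) : PMF (Option (Fin c)) :=
  if h : c = 0 then PMF.pure none
  else
    haveI : Nonempty (Fin c) := ⟨⟨0, Nat.pos_of_ne_zero h⟩⟩
    (PMF.bernoulli (min p 1).toNNReal (by simpa using ENNReal.toNNReal_mono ENNReal.one_ne_top (min_le_right p 1))).bind fun b =>
      if b then (PMF.uniformOfFintype (Fin c)).map some else PMF.pure none

/-- The law of the randomly edge-colored random `k`-uniform hypergraph `H^k_c(n,p)`: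
the edges are independent and each is present with probability `p`, receiving a
uniformly random color from `[c]`. -/
noncomputable def cHyper (n k c : ℕ) (p : ℝ≥0∞) : Measure (CSample n k c) :=
  Measure.pi fun _ => (edgePMF c p).toMeasure

/-- The law of the uncolored binomial random `k`-uniform hypergraph `H^k(n,p)`. -/
noncomputable def uHyper (n k : ℕ) (p : ℝ≥0∞) : Measure (USample n k) :=
  Measure.pi fun _ => (PMF.bernoulli (min p 1).toNNReal (by simpa using ENNReal.toNNReal_mono ENNReal.one_ne_top (min_le_right p 1))).toMeasure

/-- The status of the pair `{v, w}` in a colored graph sample (k = 2):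
`none` if absent (or if `v = w`), `some x` if present with color `x`. -/
def col {n c : ℕ} (ω : CSample n 2 c) (v w : Fin n) : Option (Fin c) :=
  if h : v = w then none else ω ⟨{v, w}, Finset.card_pair h⟩

/-- Adjacency in an uncolored graph sample (k = 2). -/
def uadj {n : ℕ} (ω : USample n 2) (v w : Fin n) : Prop :=
  if h : v = w then False else ω ⟨{v, w}, Finset.card_pair h⟩ = true


/-!
Reveal the edges one at a time. Conditioning the uncolored hypergraph on the status of an edge
`e` replaces `𝒞` by its members with `e` deleted (if `e` is present) or by its members not
using `e` (if `e` is absent), and both families are again `ℓ`-rich; so by induction on the set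
of revealed edges it suffices to compare the two laws of a single edge. If a member not using
`e` is already hit, both sides see probability one. If only a member using `e` is hit,
richness yields at least `ℓ` colors of `e` that keep the colored sample inside the event, each
of probability `q / c`, and `ℓ · q / c = p`.
-/

open Function

section Families

variable {ι : Type*} [DecidableEq ι] {c : ℕ}

def containsUncolored (𝒞 : Set (ι → Option (Fin c))) : Set (ι → Bool) :=
  {H | ∃ C ∈ 𝒞, ∀ e, C e ≠ none → H e = true}

def containsColored (𝒞 : Set (ι → Option (Fin c))) : Set (ι → Option (Fin c)) :=
  {ω | ∃ C ∈ 𝒞, ∀ e, C e ≠ none → ω e = C e}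

def IsRich (ℓ : ℕ) (𝒞 : Set (ι → Option (Fin c))) : Prop :=
  ∀ C ∈ 𝒞, ∀ e, C e ≠ none → ℓ ≤ {x : Fin c | update C e (some x) ∈ 𝒞}.ncard

def deleteEdge (e : ι) (𝒞 : Set (ι → Option (Fin c))) : Set (ι → Option (Fin c)) :=
  (update · e none) '' 𝒞

def avoiding (e : ι) (𝒞 : Set (ι → Option (Fin c))) : Set (ι → Option (Fin c)) :=
  {C ∈ 𝒞 | C e = none}

/-- The family an uncolored sample must hit once edge `e` is known to be present (`b = true`)
or absent (`b = false`). -/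
def conditionEdge (e : ι) (b : Bool) (𝒞 : Set (ι → Option (Fin c))) :
    Set (ι → Option (Fin c)) :=
  bif b then deleteEdge e 𝒞 else avoiding e 𝒞

variable {𝒞 : Set (ι → Option (Fin c))} {e : ι}

lemma update_true_mem_containsUncolored {H : ι → Bool} :
    update H e true ∈ containsUncolored 𝒞 ↔ H ∈ containsUncolored (deleteEdge e 𝒞) := by
  constructor
  · rintro ⟨C, hC, hCH⟩
    refine ⟨update C e none, ⟨C, hC, rfl⟩, fun f hf => ?_⟩
    have hfe : f ≠ e := by rintro rfl; simp at hf
    simpa [hfe] using hCH f (by simpa [hfe] using hf)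
  · rintro ⟨_, ⟨C, hC, rfl⟩, hCH⟩
    refine ⟨C, hC, fun f hf => ?_⟩
    by_cases hfe : f = e
    · simp [hfe]
    · simpa [hfe] using hCH f (by simpa [hfe] using hf)

lemma update_false_mem_containsUncolored {H : ι → Bool} :
    update H e false ∈ containsUncolored 𝒞 ↔ H ∈ containsUncolored (avoiding e 𝒞) := by
  constructor
  · rintro ⟨C, hC, hCH⟩
    have hCe : C e = none := by simpa using mt (hCH e)
    refine ⟨C, ⟨hC, hCe⟩, fun f hf => ?_⟩
    have hfe : f ≠ e := by rintro rfl; exact hf hCe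
    simpa [hfe] using hCH f hf
  · rintro ⟨C, ⟨hC, hCe⟩, hCH⟩
    refine ⟨C, hC, fun f hf => ?_⟩
    have hfe : f ≠ e := by rintro rfl; exact hf hCe
    simpa [hfe] using hCH f hf

lemma update_none_mem_containsColored {ω : ι → Option (Fin c)} :
    update ω e none ∈ containsColored 𝒞 ↔ ω ∈ containsColored (avoiding e 𝒞) := by
  constructor
  · rintro ⟨C, hC, hCω⟩
    have hCe : C e = none := by
      by_contra h
      exact h (by simpa using (hCω e h).symm)
    refine ⟨C, ⟨hC, hCe⟩, fun f hf => ?_⟩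
    have hfe : f ≠ e := by rintro rfl; exact hf hCe
    simpa [hfe] using hCω f hf
  · rintro ⟨C, ⟨hC, hCe⟩, hCω⟩
    refine ⟨C, hC, fun f hf => ?_⟩
    have hfe : f ≠ e := by rintro rfl; exact hf hCe
    simpa [hfe] using hCω f hf

lemma update_mem_containsColored_of_mem_avoiding {ω : ι → Option (Fin c)}
    (hω : ω ∈ containsColored (avoiding e 𝒞)) (v : Option (Fin c)) :
    update ω e v ∈ containsColored 𝒞 := by
  obtain ⟨C, ⟨hC, hCe⟩, hCω⟩ := hω
  refine ⟨C, hC, fun f hf => ?_⟩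
  have hfe : f ≠ e := by rintro rfl; exact hf hCe
  simpa [hfe] using hCω f hf

lemma IsRich.deleteEdge {ℓ : ℕ} (h𝒞 : IsRich ℓ 𝒞) (e : ι) : IsRich ℓ (deleteEdge e 𝒞) := by
  rintro _ ⟨C, hC, rfl⟩ f hf
  dsimp only at hf ⊢
  have hfe : f ≠ e := by rintro rfl; simp at hf
  rw [update_of_ne hfe] at hf
  refine (h𝒞 C hC f hf).trans (Set.ncard_le_ncard (fun x hx => ?_) (Set.toFinite _))
  exact ⟨update C f (some x), hx, update_comm hfe _ _ _⟩

lemma IsRich.avoiding {ℓ : ℕ} (h𝒞 : IsRich ℓ 𝒞) (e : ι) : IsRich ℓ (avoiding e 𝒞) := by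
  rintro C ⟨hC, hCe⟩ f hf
  have hfe : f ≠ e := by rintro rfl; exact hf hCe
  refine (h𝒞 C hC f hf).trans (Set.ncard_le_ncard (fun x hx => ?_) (Set.toFinite _))
  exact ⟨hx, by rwa [update_of_ne hfe.symm]⟩

lemma le_ncard_recolorings {ℓ : ℕ} (h𝒞 : IsRich ℓ 𝒞) {ω : ι → Option (Fin c)}
    (hω : ω ∈ containsColored (deleteEdge e 𝒞)) (hω' : ω ∉ containsColored (avoiding e 𝒞)) :
    ℓ ≤ {x : Fin c | update ω e (some x) ∈ containsColored 𝒞}.ncard := by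
  obtain ⟨_, ⟨C, hC, rfl⟩, hCω⟩ := hω
  have hCe : C e ≠ none := by
    intro hCe
    refine hω' ⟨C, ⟨hC, hCe⟩, fun f hf => ?_⟩
    have hfe : f ≠ e := by rintro rfl; exact hf hCe
    simpa [hfe] using hCω f (by simpa [hfe] using hf)
  refine (h𝒞 C hC e hCe).trans (Set.ncard_le_ncard (fun x hx => ?_) (Set.toFinite _))
  refine ⟨update C e (some x), hx, fun f hf => ?_⟩
  by_cases hfe : f = e
  · subst hfe; simp
  · simp only [update_of_ne hfe] at hf ⊢
    simpa [hfe] using hCω f (by simpa [hfe] using hf)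

lemma update_mem_containsUncolored {H : ι → Bool} (b : Bool) :
    update H e b ∈ containsUncolored 𝒞 ↔ H ∈ containsUncolored (conditionEdge e b 𝒞) := by
  cases b
  · exact update_false_mem_containsUncolored
  · exact update_true_mem_containsUncolored

lemma IsRich.conditionEdge {ℓ : ℕ} (h𝒞 : IsRich ℓ 𝒞) (e : ι) (b : Bool) :
    IsRich ℓ (conditionEdge e b 𝒞) := by
  cases b
  · exact h𝒞.avoiding e
  · exact h𝒞.deleteEdge e

end Families

section Marginal

variable {ι : Type*} [DecidableEq ι] {X : ι → Type*} [∀ i, MeasurableSpace (X i)]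
  {μ : ∀ i, Measure (X i)}

lemma lmarginal_insert_eq_sum [∀ i, Fintype (X i)] [∀ i, MeasurableSingletonClass (X i)]
    [∀ i, SigmaFinite (μ i)] {f : (∀ i, X i) → ℝ≥0∞} (hf : Measurable f) {T : Finset ι}
    {i : ι} (hi : i ∉ T) (x : ∀ i, X i) :
    (∫⋯∫⁻_insert i T, f ∂μ) x
      = ∑ v, (∫⋯∫⁻_T, (fun y => f (update y i v)) ∂μ) x * μ i {v} := by
  rw [lmarginal_insert _ hf hi, lintegral_fintype]
  simp_rw [lmarginal_update_of_notMem hf hi]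
  rfl

lemma lmarginal_sum_mul {κ : Type*} (s : Finset κ) {f : κ → (∀ i, X i) → ℝ≥0∞}
    (hf : ∀ j, Measurable (f j)) (a : κ → ℝ≥0∞) (T : Finset ι) (x : ∀ i, X i) :
    (∫⋯∫⁻_T, (fun y => ∑ j ∈ s, f j y * a j) ∂μ) x
      = ∑ j ∈ s, (∫⋯∫⁻_T, f j ∂μ) x * a j := by
  simp only [lmarginal]
  have hmeas j : Measurable fun y => f j (updateFinset x T y) :=
    (hf j).comp measurable_updateFinset
  rw [lintegral_finsetSum _ fun j _ => (hmeas j).mul_const (a j)]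
  exact Finset.sum_congr rfl fun j _ => lintegral_mul_const _ (hmeas j)

end Marginal

section Coupling

variable {ι : Type*} [DecidableEq ι] {c ℓ : ℕ} {𝒞 : Set (ι → Option (Fin c))}
  {ν : Measure Bool} [IsProbabilityMeasure ν]
  {κ : Measure (Option (Fin c))} [IsProbabilityMeasure κ] {r : ℝ≥0∞}

lemma sum_indicator_conditionEdge_le (h𝒞 : IsRich ℓ 𝒞) (hκ : ∀ x, κ {some x} = r)
    (hν : ν {true} ≤ ℓ * r) (e : ι) (ω : ι → Option (Fin c)) :
    ∑ b, (containsColored (conditionEdge e b 𝒞)).indicator 1 ω * ν {b}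
      ≤ ∑ v, (containsColored 𝒞).indicator 1 (update ω e v) * κ {v} := by
  simp only [Fintype.sum_bool, conditionEdge, cond_true, cond_false]
  by_cases hav : ω ∈ containsColored (avoiding e 𝒞)
  · have hall v := update_mem_containsColored_of_mem_avoiding hav v
    calc _ ≤ ν {true} + ν {false} := by
          gcongr <;> exact mul_le_of_le_one_left' (Set.indicator_le_self' (by simp) _)
      _ = ∑ v, κ {v} := by
          rw [← Fintype.sum_bool fun b => ν {b}, sum_measure_singleton, sum_measure_singleton]
          simp only [Finset.coe_univ, measure_univ]
      _ = _ := by simp [hall]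
  by_cases hdel : ω ∈ containsColored (deleteEdge e 𝒞)
  · have hcount := le_ncard_recolorings h𝒞 hdel hav
    calc _ = ν {true} := by simp [hdel, hav]
      _ ≤ ℓ * r := hν
      _ ≤ {x : Fin c | update ω e (some x) ∈ containsColored 𝒞}.ncard * r := by
          gcongr
      _ = ∑ x, (containsColored 𝒞).indicator 1 (update ω e (some x)) * κ {some x} := by
          classical
          simp [hκ, Set.indicator_apply, Set.ncard_eq_toFinset_card', Finset.sum_ite]
      _ ≤ _ := by rw [Fintype.sum_option]; exact le_add_self
  · simp [hdel, hav]

lemma lmarginal_indicator_containsUncolored_le [Finite ι] (h𝒞 : IsRich ℓ 𝒞)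
    (hκ : ∀ x, κ {some x} = r) (hν : ν {true} ≤ ℓ * r) (T : Finset ι) :
    (∫⋯∫⁻_T, (containsUncolored 𝒞).indicator 1 ∂fun _ => ν) (fun _ => false)
      ≤ (∫⋯∫⁻_T, (containsColored 𝒞).indicator 1 ∂fun _ => κ) (fun _ => none) := by
  induction T using Finset.induction_on generalizing 𝒞 with
  | empty =>
    simp only [lmarginal_empty]
    refine Set.indicator_apply_le' (fun ⟨C, hC, hCH⟩ => ?_) fun _ => zero_le
    have hnone : (fun _ => none) ∈ containsColored 𝒞 :=
      ⟨C, hC, fun e he => absurd (hCH e he) (by simp)⟩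
    rw [Set.indicator_of_mem hnone]
    exact le_rfl
  | insert e T he ih =>
    calc _ = ∑ b, (∫⋯∫⁻_T, (containsUncolored (conditionEdge e b 𝒞)).indicator 1
              ∂fun _ => ν) (fun _ => false) * ν {b} := by
          have hsection b : (fun H => (containsUncolored 𝒞).indicator 1 (update H e b))
              = (containsUncolored (conditionEdge e b 𝒞)).indicator (1 : (ι → Bool) → ℝ≥0∞) := by
            classical
            ext H
            exact if_congr (update_mem_containsUncolored b) rfl rfl
          simp only [lmarginal_insert_eq_sum .of_discrete he, hsection]
      _ ≤ ∑ b, (∫⋯∫⁻_T, (containsColored (conditionEdge e b 𝒞)).indicator 1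
              ∂fun _ => κ) (fun _ => none) * ν {b} := by
          gcongr with b
          exact ih (h𝒞.conditionEdge e b)
      _ = (∫⋯∫⁻_T, (fun ω => ∑ b, (containsColored (conditionEdge e b 𝒞)).indicator 1 ω * ν {b})
              ∂fun _ => κ) (fun _ => none) :=
          (lmarginal_sum_mul _ (fun _ => .of_discrete) _ _ _).symm
      _ ≤ (∫⋯∫⁻_T, (fun ω => ∑ v, (containsColored 𝒞).indicator 1 (update ω e v) * κ {v})
              ∂fun _ => κ) (fun _ => none) :=
          lmarginal_mono (fun ω => sum_indicator_conditionEdge_le h𝒞 hκ hν e ω) _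
      _ = _ := by
          rw [lmarginal_sum_mul _ (fun _ => .of_discrete), lmarginal_insert_eq_sum .of_discrete he]

theorem pi_containsUncolored_le [Fintype ι] (h𝒞 : IsRich ℓ 𝒞) (hκ : ∀ x, κ {some x} = r)
    (hν : ν {true} ≤ ℓ * r) :
    Measure.pi (fun _ : ι => ν) (containsUncolored 𝒞)
      ≤ Measure.pi (fun _ : ι => κ) (containsColored 𝒞) := by
  rw [← lintegral_indicator_one (.of_discrete), ← lintegral_indicator_one (.of_discrete),
    lintegral_eq_lmarginal_univ (fun _ => false), lintegral_eq_lmarginal_univ (fun _ => none)]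
  exact lmarginal_indicator_containsUncolored_le h𝒞 hκ hν _

end Coupling

lemma edgePMF_apply_some {c : ℕ} (hc : c ≠ 0) (p : ℝ≥0∞) (x : Fin c) :
    edgePMF c p (some x) = min p 1 / c := by
  have : Nonempty (Fin c) := ⟨⟨0, Nat.pos_of_ne_zero hc⟩⟩
  rw [edgePMF, dif_neg hc, PMF.bind_apply, tsum_bool]
  simp [PMF.bernoulli, PMF.ofFintype_apply, PMF.map_apply, div_eq_mul_inv]

theorem coupling_rich_families_general (n k ℓ c : ℕ) (hℓ : 0 < ℓ)
    (hc : 0 < c) (p : ℝ)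
    (hq1 : (c : ℝ) * p / ℓ ≤ 1)
    (𝒞 : Set (CSample n k c))
    (hrich : ∀ C ∈ 𝒞, ∀ e : HEdge n k, C e ≠ none →
      ℓ ≤ {x : Fin c | Function.update C e (some x) ∈ 𝒞}.ncard) :
    uHyper n k (ENNReal.ofReal p)
        {H | ∃ C ∈ 𝒞, ∀ e : HEdge n k, C e ≠ none → H e = true}
      ≤ cHyper n k c (ENNReal.ofReal ((c : ℝ) * p / ℓ))
        {ω | ∃ C ∈ 𝒞, ∀ e : HEdge n k, C e ≠ none → ω e = C e} := by
  set q := ENNReal.ofReal ((c : ℝ) * p / ℓ)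
  have hpq : ENNReal.ofReal p = ℓ * (q / c) := by
    rw [← ENNReal.ofReal_natCast c, ← ENNReal.ofReal_div_of_pos (by positivity),
      ← ENNReal.ofReal_natCast ℓ, ← ENNReal.ofReal_mul (by positivity)]
    congr 1
    field_simp
  refine pi_containsUncolored_le (r := q / c) hrich (fun x => ?_) ?_
  · rw [PMF.toMeasure_apply_singleton _ _ (.of_discrete), edgePMF_apply_some hc.ne',
      min_eq_left (ENNReal.ofReal_le_one.2 hq1)]
  · rw [PMF.toMeasure_apply_singleton _ _ (.of_discrete), ← hpq]
    simp [PMF.bernoulli, PMF.ofFintype_apply]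

/-- the coupling theorem. Let `q = c·p/ℓ ≤ 1` and let `𝒞` be an
`ℓ`-rich collection of edge-colored `k`-uniform hypergraphs on `[n]` with colors in `[c]`
(each such hypergraph is encoded by the function assigning to every potential edge
either `none` (absent) or `some x` (present with color `x`)). Then the probability that
`H ~ H^k(n,p)` contains the uncolored version of some member of `𝒞` is at most the
probability that `H ~ H^k_c(n,q)` contains some member of `𝒞` with matching colors. -/
theorem coupling_rich_families (n k ℓ c : ℕ) (hn : 0 < n) (hk : 0 < k) (hℓ : 0 < ℓ)
    (hc : 0 < c) (p : ℝ) (hp0 : 0 ≤ p) (hp1 : p ≤ 1)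
    (hq1 : (c : ℝ) * p / ℓ ≤ 1)
    (𝒞 : Set (CSample n k c))
    (hrich : ∀ C ∈ 𝒞, ∀ e : HEdge n k, C e ≠ none →
      ℓ ≤ {x : Fin c | Function.update C e (some x) ∈ 𝒞}.ncard) :
    uHyper n k (ENNReal.ofReal p)
        {H | ∃ C ∈ 𝒞, ∀ e : HEdge n k, C e ≠ none → H e = true}
      ≤ cHyper n k c (ENNReal.ofReal ((c : ℝ) * p / ℓ))
        {ω | ∃ C ∈ 𝒞, ∀ e : HEdge n k, C e ≠ none → ω e = C e} :=
  coupling_rich_families_general n k ℓ c hℓ hc p hq1 𝒞 hrich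
end

section
/- Let p satisfy log n/n ≤ p ≤ 2 log n/n and let γ:ℕ→(0,1) be any function with γ(n)→0. Then with probability tending to 1 as n→∞, G ~ G(n,p) satisfies the following. For every bipartite (not necessarily induced) subgraph B = (S ∪ W, E') of G with S and W disjoint, |S| ≤ n/log^{0.9} n, (1−γ(n))·n/log log n ≤ |W| ≤ (1+γ(n))·n/log log n, and d_B(v) ≥ log n/(log log n)² for every v ∈ S, there exists a ⌈log^{0.2} n⌉-matching from S to W in B, i.e., a subgraph M of B in which every vertex of S has exactly ⌈log^{0.2} n⌉ neighbors in W and every vertex of W has degree at most 1. -/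
open MeasureTheory Filter
open scoped ENNReal

/-!
Let `k = ⌈log^{0.2} n⌉` and `D = log n / (log log n)²`. With high probability no set `U` of at
most `2k n / log^{0.9} n` vertices spans `⌈D |U| / 2k⌉` edges: by a first-moment count the
expected number of such sets of size `u` is at most `(1 / log n)^u`. On this event Hall's
condition with multiplicity `k` holds for `S`: if `T ⊆ S` had fewer than `k |T|` neighbours in `B`,
then `T ∪ N(T)` would have at most `2k |T|` vertices but would span the at least `D |T|` edges of
`B` leaving `T`. Hall's theorem, applied to `k` copies of every vertex of `S`, gives the matching.
-/

open Finset

theorem choose_le_exp_mul_div_pow (m a : ℕ) :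
    (m.choose a : ℝ) ≤ (Real.exp 1 * m / a) ^ a := by
  rcases Nat.eq_zero_or_pos a with rfl | ha
  · simp
  have ha' : (0 : ℝ) < a := by exact_mod_cast ha
  have hfact : (0 : ℝ) < a.factorial := by exact_mod_cast a.factorial_pos
  have hexp : (a : ℝ) ^ a / a.factorial ≤ Real.exp 1 ^ a := by
    rw [← Real.exp_nat_mul, mul_one]
    exact Real.pow_div_factorial_le_exp _ ha'.le a
  calc (m.choose a : ℝ) ≤ (m : ℝ) ^ a / a.factorial := Nat.choose_le_pow_div a m
    _ = ((m : ℝ) / a) ^ a * ((a : ℝ) ^ a / a.factorial) := by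
        rw [div_pow]; field_simp
    _ ≤ ((m : ℝ) / a) ^ a * Real.exp 1 ^ a := by gcongr
    _ = (Real.exp 1 * m / a) ^ a := by rw [← mul_pow]; ring

theorem choose_choose_two_mul_pow_le (u a : ℕ) {p : ℝ} (hp : 0 ≤ p) :
    ((u.choose 2).choose a : ℝ) * p ^ a ≤ (Real.exp 1 * u ^ 2 * p / (2 * a)) ^ a := by
  have hu : ((u.choose 2 : ℕ) : ℝ) ≤ (u : ℝ) ^ 2 / 2 := by
    rw [Nat.cast_choose_two]; nlinarith [(Nat.cast_nonneg u : (0:ℝ) ≤ u)]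
  calc ((u.choose 2).choose a : ℝ) * p ^ a
      ≤ (Real.exp 1 * (u.choose 2 : ℕ) / a) ^ a * p ^ a := by
        gcongr; exact choose_le_exp_mul_div_pow _ _
    _ ≤ (Real.exp 1 * ((u : ℝ) ^ 2 / 2) / a) ^ a * p ^ a := by gcongr
    _ = (Real.exp 1 * u ^ 2 * p / (2 * a)) ^ a := by rw [← mul_pow]; ring

theorem exp_div_pow_mul_pow_le {t r : ℝ} {u a : ℕ} (ht : 10 ≤ t) (hr : 0 < r)
    (hrt : r ≤ 4 / t ^ 7) (hua : 8 * u ≤ a) :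
    (Real.exp 1 / r) ^ u * (t ^ 3 * r) ^ a ≤ (t ^ 10)⁻¹ ^ u := by
  have ht0 : 0 < t := by linarith
  have hbase : t ^ 3 * r ≤ 1 := by
    calc t ^ 3 * r ≤ t ^ 3 * (4 / t ^ 7) := by gcongr
      _ = 4 / t ^ 4 := by field_simp
      _ ≤ 1 := by rw [div_le_one (by positivity)]; nlinarith [pow_le_pow_left₀ (by norm_num) ht 4]
  have hr7 : r ^ 7 ≤ 4 ^ 7 / t ^ 49 := by
    calc r ^ 7 ≤ (4 / t ^ 7) ^ 7 := by gcongr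
      _ = 4 ^ 7 / t ^ 49 := by rw [div_pow, ← pow_mul]
  have he : Real.exp 1 * 4 ^ 7 ≤ t ^ 15 := by
    have h15 : (10 : ℝ) ^ 15 ≤ t ^ 15 := pow_le_pow_left₀ (by norm_num) ht 15
    nlinarith [Real.exp_one_lt_d9]
  calc (Real.exp 1 / r) ^ u * (t ^ 3 * r) ^ a
      ≤ (Real.exp 1 / r) ^ u * (t ^ 3 * r) ^ (8 * u) := by
        gcongr ?_ * ?_
        exact pow_le_pow_of_le_one (by positivity) hbase hua
    _ = (Real.exp 1 * t ^ 24 * r ^ 7) ^ u := by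
        rw [pow_mul, ← mul_pow]; congr 1; field_simp
    _ ≤ (Real.exp 1 * t ^ 24 * (4 ^ 7 / t ^ 49)) ^ u := by gcongr
    _ ≤ (t ^ 10)⁻¹ ^ u := by
        gcongr
        rw [show Real.exp 1 * t ^ 24 * (4 ^ 7 / t ^ 49) = Real.exp 1 * 4 ^ 7 / t ^ 25 by
          field_simp, div_le_iff₀ (by positivity)]
        calc Real.exp 1 * 4 ^ 7 ≤ t ^ 15 := he
          _ = (t ^ 10)⁻¹ * t ^ 25 := by field_simp

theorem exp_one_mul_mul_pow_seven_le {t ℓ k : ℝ} {u a : ℕ} (hℓ : 1 ≤ ℓ)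
    (htℓ : 4 * Real.exp 1 * ℓ ^ 2 ≤ t) (hk1 : 1 ≤ k) (hk2 : k ≤ 2 * t ^ 2)
    (ha : t ^ 10 / ℓ ^ 2 * u / (2 * k) ≤ a) :
    Real.exp 1 * u * t ^ 7 ≤ a := by
  have ht0 : 0 < t := lt_of_lt_of_le (by positivity) htℓ
  calc Real.exp 1 * u * t ^ 7 = 4 * Real.exp 1 * ℓ ^ 2 * t ^ 7 * u / (4 * ℓ ^ 2) := by
        field_simp
    _ ≤ t * t ^ 7 * u / (4 * ℓ ^ 2) := by gcongr
    _ = t ^ 10 / ℓ ^ 2 * u / (2 * (2 * t ^ 2)) := by field_simp; ring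
    _ ≤ t ^ 10 / ℓ ^ 2 * u / (2 * k) := by gcongr
    _ ≤ a := ha

/-- Here `t` plays the role of `log^{1/10} n`, so that all powers of `log n` that occur are
integral powers of `t`. -/
theorem choose_mul_choose_choose_mul_pow_le {t ℓ k p : ℝ} {n u a : ℕ} (hℓ : 1 ≤ ℓ)
    (htℓ : 4 * Real.exp 1 * ℓ ^ 2 ≤ t) (hk1 : 1 ≤ k) (hk2 : k ≤ 2 * t ^ 2) (hu : 1 ≤ u)
    (hun : (u : ℝ) ≤ 2 * k * n / t ^ 9) (ha : t ^ 10 / ℓ ^ 2 * u / (2 * k) ≤ a)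
    (hp0 : 0 ≤ p) (hp : p ≤ 2 * t ^ 10 / n) :
    (n.choose u : ℝ) * (((u.choose 2).choose a : ℝ) * p ^ a) ≤ (t ^ 10)⁻¹ ^ u := by
  have he := Real.exp_one_gt_d9
  have ht : 10 ≤ t := by nlinarith
  have ht0 : 0 < t := by linarith
  have hu0 : (0 : ℝ) < u := by exact_mod_cast hu
  have hn0 : (0 : ℝ) < n := by
    rcases n.eq_zero_or_pos with rfl | hn
    · norm_num at hun; linarith
    · exact_mod_cast hn
  have hau := exp_one_mul_mul_pow_seven_le hℓ htℓ hk1 hk2 ha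
  have h8 : 8 * u ≤ a := by
    have : (8 : ℝ) ≤ Real.exp 1 * t ^ 7 := by
      nlinarith [pow_le_pow_left₀ (by norm_num) ht 7]
    exact_mod_cast (by nlinarith : (8 * u : ℝ) ≤ a)
  have ha0 : (0 : ℝ) < a := lt_of_lt_of_le (by positivity) hau
  set r : ℝ := u / n
  have hr0 : 0 < r := by positivity
  have hrt : r ≤ 4 / t ^ 7 := by
    calc r ≤ 2 * (2 * t ^ 2) / t ^ 9 := by
          rw [div_le_iff₀ hn0]
          calc (u : ℝ) ≤ 2 * k * n / t ^ 9 := hun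
            _ ≤ 2 * (2 * t ^ 2) * n / t ^ 9 := by gcongr
            _ = _ := by ring
      _ = 4 / t ^ 7 := by field_simp; ring
  have hbase : Real.exp 1 * u ^ 2 * p / (2 * a) ≤ t ^ 3 * r := by
    rw [div_le_iff₀ (by positivity)]
    have hpn : p * n ≤ 2 * t ^ 10 := by rwa [le_div_iff₀ hn0] at hp
    calc Real.exp 1 * u ^ 2 * p = Real.exp 1 * u ^ 2 * (p * n) / n := by field_simp
      _ ≤ Real.exp 1 * u ^ 2 * (2 * t ^ 10) / n := by gcongr
      _ = (Real.exp 1 * u * t ^ 7) * (t ^ 3 * r) * 2 := by simp only [r]; field_simp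
      _ ≤ a * (t ^ 3 * r) * 2 := by gcongr
      _ = t ^ 3 * r * (2 * a) := by ring
  calc (n.choose u : ℝ) * (((u.choose 2).choose a : ℝ) * p ^ a)
      ≤ (Real.exp 1 * n / u) ^ u * (Real.exp 1 * u ^ 2 * p / (2 * a)) ^ a := by
        gcongr
        · exact choose_le_exp_mul_div_pow n u
        · exact choose_choose_two_mul_pow_le u a hp0
    _ ≤ (Real.exp 1 / r) ^ u * (t ^ 3 * r) ^ a := by
        rw [show Real.exp 1 * n / u = Real.exp 1 / r by simp only [r]; field_simp]
        gcongr
    _ ≤ (t ^ 10)⁻¹ ^ u := exp_div_pow_mul_pow_le ht hr0 hrt h8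

theorem sum_filter_card_eq_sum_choose {α β : Type*} [Fintype α] [AddCommMonoid β]
    (P : ℕ → Prop) [DecidablePred P] (f : ℕ → β) :
    ∑ U ∈ (univ : Finset (Finset α)) with P #U, f #U =
      ∑ u ∈ range (Fintype.card α + 1) with P u, (Fintype.card α).choose u • f u := by
  rw [sum_filter, sum_filter, ← powerset_univ,
    sum_powerset_apply_card (fun u => if P u then f u else 0)]
  simp only [card_univ, smul_ite, smul_zero]

theorem card_filter_val_subset (n k : ℕ) (U : Finset (Fin n)) :
    #{e : HEdge n k | e.1 ⊆ U} = (#U).choose k := by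
  rw [← card_powersetCard, ← card_map (Function.Embedding.subtype _)]
  congr 1
  ext s
  simp [mem_powersetCard, and_comm]

instance uHyper.isProbabilityMeasure (n k : ℕ) (P : ℝ≥0∞) :
    IsProbabilityMeasure (uHyper n k P) := by
  unfold uHyper; infer_instance

theorem uHyper_forall_eq_true (n k : ℕ) (P : ℝ≥0∞) (A : Finset (HEdge n k)) :
    uHyper n k P {ω | ∀ e ∈ A, ω e = true} = min P 1 ^ #A := by
  have hcyl : {ω : USample n k | ∀ e ∈ A, ω e = true}
      = Set.univ.pi fun e => if e ∈ A then {true} else Set.univ := by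
    ext ω
    simp only [Set.mem_ofPred_eq, Set.mem_pi, Set.mem_univ, forall_true_left]
    refine ⟨fun h e => ?_, fun h e he => by simpa [he] using h e⟩
    split_ifs with he
    exacts [h e he, trivial]
  rw [hcyl, uHyper, Measure.pi_pi]
  calc _ = ∏ e, if e ∈ A then min P 1 else 1 := by
        refine prod_congr rfl fun e _ => ?_
        split_ifs
        · rw [PMF.toMeasure_apply_singleton _ _ (measurableSet_singleton _)]
          exact ENNReal.coe_toNNReal (ne_top_of_le_ne_top ENNReal.one_ne_top (min_le_right P 1))
        · exact measure_univ
    _ = min P 1 ^ #A := by simp only [prod_ite_mem, univ_inter, prod_const]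

def spannedEdges {n k : ℕ} (ω : USample n k) (U : Finset (Fin n)) : Finset (HEdge n k) :=
  {e | e.1 ⊆ U ∧ ω e = true}

def IsSparse {n k : ℕ} (ω : USample n k) (m : ℝ) (a : ℕ → ℕ) : Prop :=
  ∀ U : Finset (Fin n), U.Nonempty → (#U : ℝ) ≤ m → #(spannedEdges ω U) < a #U

theorem uHyper_le_card_spannedEdges_le (n k : ℕ) (P : ℝ≥0∞) (U : Finset (Fin n)) (a : ℕ) :
    uHyper n k P {ω | a ≤ #(spannedEdges ω U)} ≤ ((#U).choose k).choose a * min P 1 ^ a := by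
  have hcover : {ω : USample n k | a ≤ #(spannedEdges ω U)} ⊆
      ⋃ A ∈ powersetCard a {e : HEdge n k | e.1 ⊆ U}, {ω | ∀ e ∈ A, ω e = true} := by
    intro ω hω
    obtain ⟨A, hA, hAcard⟩ := exists_subset_card_eq hω
    refine Set.mem_biUnion (mem_powersetCard.2 ⟨fun e he => ?_, hAcard⟩) fun e he => ?_
    · exact mem_filter.2 ⟨mem_univ e, (mem_filter.1 (hA he)).2.1⟩
    · exact (mem_filter.1 (hA he)).2.2
  calc uHyper n k P {ω | a ≤ #(spannedEdges ω U)}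
      ≤ ∑ A ∈ powersetCard a {e : HEdge n k | e.1 ⊆ U}, uHyper n k P {ω | ∀ e ∈ A, ω e = true} :=
        (measure_mono hcover).trans (measure_biUnion_finset_le _ _)
    _ = ((#U).choose k).choose a * min P 1 ^ a := by
        rw [sum_congr rfl fun A hA => by rw [uHyper_forall_eq_true, (mem_powersetCard.1 hA).2],
          sum_const, card_powersetCard, card_filter_val_subset, nsmul_eq_mul]

theorem uHyper_not_isSparse_le_sum (n k : ℕ) (P : ℝ≥0∞) (m : ℝ) (a : ℕ → ℕ) :
    uHyper n k P {ω | ¬IsSparse ω m a} ≤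
      ∑ u ∈ (range (n + 1)).filter (fun u : ℕ => 0 < u ∧ (u : ℝ) ≤ m),
        n.choose u * (((u.choose k).choose (a u) : ℝ≥0∞) * min P 1 ^ a u) := by
  have hcover : {ω : USample n k | ¬IsSparse ω m a} ⊆
      ⋃ U ∈ (univ : Finset (Finset (Fin n))).filter (fun U => 0 < #U ∧ (#U : ℝ) ≤ m),
        {ω | a #U ≤ #(spannedEdges ω U)} := by
    intro ω hω
    simp only [IsSparse, not_forall, not_lt, Set.mem_ofPred_eq] at hω
    obtain ⟨U, hU, hUm, hdense⟩ := hω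
    exact Set.mem_biUnion (mem_filter.2 ⟨mem_univ U, card_pos.2 hU, hUm⟩) hdense
  refine (measure_mono hcover).trans <| (measure_biUnion_finset_le _ _).trans ?_
  refine (sum_le_sum fun U _ => uHyper_le_card_spannedEdges_le n k P U (a #U)).trans_eq ?_
  rw [sum_filter_card_eq_sum_choose (fun u => 0 < u ∧ (u : ℝ) ≤ m)
    (fun u => ((u.choose k).choose (a u) : ℝ≥0∞) * min P 1 ^ a u)]
  simp only [Fintype.card_fin, nsmul_eq_mul]

theorem sum_Ico_one_pow_le_two_mul {x : ℝ} (hx0 : 0 ≤ x) (hx : x ≤ 1 / 2) (N : ℕ) :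
    ∑ u ∈ Ico 1 N, x ^ u ≤ 2 * x := by
  calc ∑ u ∈ Ico 1 N, x ^ u ≤ x ^ 1 / (1 - x) := geom_sum_Ico_le_of_lt_one hx0 (by linarith)
    _ ≤ 2 * x := by rw [pow_one, div_le_iff₀ (by linarith)]; nlinarith

theorem natCast_mul_natCast_mul_min_ofReal_pow_le {N M a : ℕ} {p x : ℝ} (hp : 0 ≤ p)
    (h : (N : ℝ) * (M * p ^ a) ≤ x) :
    (N : ℝ≥0∞) * (M * min (ENNReal.ofReal p) 1 ^ a) ≤ ENNReal.ofReal x :=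
  calc (N : ℝ≥0∞) * (M * min (ENNReal.ofReal p) 1 ^ a)
      ≤ N * (M * ENNReal.ofReal p ^ a) := by gcongr; exact min_le_left _ _
    _ = ENNReal.ofReal (N * (M * p ^ a)) := by
        rw [ENNReal.ofReal_mul (by positivity), ENNReal.ofReal_mul (by positivity),
          ENNReal.ofReal_pow hp, ENNReal.ofReal_natCast, ENNReal.ofReal_natCast]
    _ ≤ ENNReal.ofReal x := ENNReal.ofReal_le_ofReal h

theorem uHyper_not_isSparse_le {n k : ℕ} {L ℓ p : ℝ} (hL : 0 < L) (hℓ : 1 ≤ ℓ)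
    (hℓL : 4 * Real.exp 1 * ℓ ^ 2 ≤ L ^ (0.1 : ℝ)) (hk1 : 1 ≤ k)
    (hk2 : (k : ℝ) ≤ 2 * L ^ (0.2 : ℝ)) (hp0 : 0 ≤ p) (hp : p ≤ 2 * L / n) :
    uHyper n 2 (ENNReal.ofReal p)
        {ω | ¬IsSparse ω (2 * k * (n / L ^ (0.9 : ℝ))) fun u => ⌈L / ℓ ^ 2 * u / (2 * k)⌉₊} ≤
      ENNReal.ofReal (2 / L) := by
  set t := L ^ (0.1 : ℝ)
  have hpow : ∀ m : ℕ, L ^ ((m : ℝ) / 10) = t ^ m := fun m => by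
    rw [← Real.rpow_natCast, ← Real.rpow_mul hL.le]; ring_nf
  have hL10 : L = t ^ 10 := by rw [← hpow]; norm_num
  have hL9 : L ^ (0.9 : ℝ) = t ^ 9 := by rw [← hpow]; norm_num
  have hL2 : L ^ (0.2 : ℝ) = t ^ 2 := by rw [← hpow]; norm_num
  have hx : (t ^ 10)⁻¹ ≤ 1 / 2 := by
    rw [← hL10, inv_eq_one_div]
    have : 2 ≤ L := by
      have : (2 : ℝ) ^ 10 ≤ t ^ 10 := by gcongr; nlinarith [Real.exp_one_gt_d9]
      linarith
    gcongr
  have hterm : ∀ u ∈ (range (n + 1)).filter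
      (fun u : ℕ => 0 < u ∧ (u : ℝ) ≤ 2 * k * (n / L ^ (0.9 : ℝ))),
      (n.choose u : ℝ≥0∞) * (((u.choose 2).choose ⌈L / ℓ ^ 2 * u / (2 * k)⌉₊ : ℝ≥0∞) *
        min (ENNReal.ofReal p) 1 ^ ⌈L / ℓ ^ 2 * u / (2 * k)⌉₊) ≤
        ENNReal.ofReal ((t ^ 10)⁻¹ ^ u) := by
    intro u hu
    obtain ⟨hu0, hum⟩ := (mem_filter.1 hu).2
    refine natCast_mul_natCast_mul_min_ofReal_pow_le hp0 <|
      choose_mul_choose_choose_mul_pow_le hℓ hℓL (by exact_mod_cast hk1) (hL2 ▸ hk2) hu0 ?_ ?_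
        hp0 (hL10 ▸ hp)
    · rw [← hL9, mul_div_assoc]; exact hum
    · rw [← hL10]; exact Nat.le_ceil _
  calc _ ≤ _ := uHyper_not_isSparse_le_sum n 2 _ _ _
    _ ≤ ∑ u ∈ Ico 1 (n + 1), ENNReal.ofReal ((t ^ 10)⁻¹ ^ u) := by
        refine (sum_le_sum hterm).trans (sum_le_sum_of_subset fun u hu => ?_)
        simp only [mem_filter, mem_range] at hu
        exact mem_Ico.2 ⟨hu.2.1, hu.1⟩
    _ = ENNReal.ofReal (∑ u ∈ Ico 1 (n + 1), (t ^ 10)⁻¹ ^ u) :=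
        (ENNReal.ofReal_sum_of_nonneg fun u _ => by positivity).symm
    _ ≤ ENNReal.ofReal (2 / L) := by
        gcongr
        rw [hL10, div_eq_mul_inv]
        exact sum_Ico_one_pow_le_two_mul (by positivity) hx _

section StarMatching

variable {α β : Type*} [DecidableEq α] [DecidableEq β]

def nbhd (E : Finset (α × β)) (s : α) : Finset β := {e ∈ E | e.1 = s}.image Prod.snd

theorem mem_nbhd {E : Finset (α × β)} {s : α} {w : β} : w ∈ nbhd E s ↔ (s, w) ∈ E := by
  simp only [nbhd, mem_image, mem_filter]
  exact ⟨fun ⟨e, ⟨he, h1⟩, h2⟩ => h1 ▸ h2 ▸ he, fun h => ⟨_, ⟨h, rfl⟩, rfl⟩⟩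

theorem exists_star_matching_of_hall (E : Finset (α × β)) (S : Finset α) (k : ℕ)
    (hall : ∀ T ⊆ S, k * #T ≤ #(T.biUnion (nbhd E))) :
    ∃ M ⊆ E, (∀ s ∈ S, #{e ∈ M | e.1 = s} = k) ∧ ∀ w, #{e ∈ M | e.2 = w} ≤ 1 := by
  have hcopies : ∀ A : Finset (S × Fin k), #A ≤ #(A.biUnion fun x => nbhd E x.1.1) := by
    intro A
    set T := (A.image Prod.fst).map (Function.Embedding.subtype _)
    have hA : #A ≤ k * #T := by
      calc #A ≤ #(A.image Prod.fst ×ˢ (univ : Finset (Fin k))) :=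
            card_le_card fun x hx => mem_product.2 ⟨mem_image_of_mem _ hx, mem_univ _⟩
        _ = k * #T := by rw [card_product, card_univ, Fintype.card_fin, card_map, mul_comm]
    have hN : A.biUnion (fun x => nbhd E x.1.1) = T.biUnion (nbhd E) := by
      ext w; simp [T]
    rw [hN]
    refine hA.trans (hall T fun s hs => ?_)
    obtain ⟨x, -, rfl⟩ := Finset.mem_map.1 hs
    exact x.2
  obtain ⟨f, hf, hfE⟩ := (all_card_le_biUnion_card_iff_exists_injective _).1 hcopies
  set g : S × Fin k → α × β := fun x => (x.1.1, f x)
  have hg : Function.Injective g := fun x y hxy => hf (congrArg Prod.snd hxy)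
  refine ⟨univ.image g, fun e he => ?_, fun s hs => ?_, fun w => ?_⟩
  · obtain ⟨x, -, rfl⟩ := mem_image.1 he
    exact mem_nbhd.1 (hfE x)
  · have hfiber : ({x | (g x).1 = s} : Finset (S × Fin k)) = {⟨s, hs⟩} ×ˢ univ := by
      ext ⟨⟨y, hy⟩, i⟩; simp [g, eq_comm]
    rw [filter_image, card_image_of_injective _ hg, hfiber, card_product, card_singleton,
      card_univ, Fintype.card_fin, one_mul]
  · refine card_le_one.2 fun e he e' he' => ?_
    obtain ⟨⟨x, -, rfl⟩, hx⟩ := (mem_filter.1 he).imp_left mem_image.1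
    obtain ⟨⟨y, -, rfl⟩, hy⟩ := (mem_filter.1 he').imp_left mem_image.1
    rw [hf (hx.trans hy.symm)]

end StarMatching

theorem injOn_pair_of_disjoint {α : Type*} [DecidableEq α] {S W : Finset α} (h : Disjoint S W) :
    Set.InjOn (fun e : α × α => ({e.1, e.2} : Finset α)) {e | e.1 ∈ S ∧ e.2 ∈ W} := by
  rintro ⟨a, b⟩ ⟨ha, hb⟩ ⟨c, d⟩ ⟨hc, hd⟩ hpair
  have hset : ({a, b} : Set α) = {c, d} := by simpa using congrArg ((↑) : Finset α → Set α) hpair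
  rcases Set.pair_eq_pair_iff.1 hset with ⟨rfl, rfl⟩ | ⟨rfl, -⟩
  · rfl
  · exact absurd hd (disjoint_left.1 h ha)

theorem exists_ne_eq_true_of_uadj {n : ℕ} {ω : USample n 2} {v w : Fin n} (h : uadj ω v w) :
    ∃ hvw : v ≠ w, ω ⟨{v, w}, card_pair hvw⟩ = true := by
  by_cases hvw : v = w
  · simp [uadj, hvw] at h
  · exact ⟨hvw, by simpa [uadj, hvw] using h⟩

section Expansion

variable {n : ℕ} {ω : USample n 2} {S W : Finset (Fin n)} {E : Finset (Fin n × Fin n)}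

theorem card_filter_fst_mem_le_card_spannedEdges (hSW : Disjoint S W)
    (hE : ∀ e ∈ E, e.1 ∈ S ∧ e.2 ∈ W ∧ uadj ω e.1 e.2) (T : Finset (Fin n)) :
    #{e ∈ E | e.1 ∈ T} ≤ #(spannedEdges ω (T ∪ T.biUnion (nbhd E))) := by
  rw [← card_map (Function.Embedding.subtype _)]
  refine card_le_card_of_injOn (fun e => {e.1, e.2}) (fun e he => ?_)
    ((injOn_pair_of_disjoint hSW).mono fun e he => ?_)
  · obtain ⟨heE, heT⟩ := mem_filter.1 he
    obtain ⟨hvw, hω⟩ := exists_ne_eq_true_of_uadj (hE e heE).2.2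
    refine mem_map.2 ⟨⟨{e.1, e.2}, card_pair hvw⟩, mem_filter.2 ⟨mem_univ _, ?_, hω⟩, rfl⟩
    refine insert_subset (mem_union_left _ heT) (singleton_subset_iff.2 (mem_union_right _ ?_))
    exact mem_biUnion.2 ⟨e.1, heT, mem_nbhd.2 heE⟩
  · have := hE e (mem_filter.1 he).1
    exact ⟨this.1, this.2.1⟩

theorem mul_card_le_card_biUnion_nbhd_of_isSparse {k : ℕ} {D σ : ℝ} (hk : 1 ≤ k) (hD : 0 ≤ D)
    (hω : IsSparse ω (2 * k * σ) fun u => ⌈D * u / (2 * k)⌉₊) (hSW : Disjoint S W)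
    (hS : (#S : ℝ) ≤ σ) (hE : ∀ e ∈ E, e.1 ∈ S ∧ e.2 ∈ W ∧ uadj ω e.1 e.2)
    (hdeg : ∀ s ∈ S, D ≤ #{e ∈ E | e.1 = s}) :
    ∀ T ⊆ S, k * #T ≤ #(T.biUnion (nbhd E)) := by
  intro T hT
  by_contra! hfew
  set U := T ∪ T.biUnion (nbhd E)
  have hTne : T.Nonempty := nonempty_iff_ne_empty.2 fun h => by simp [h] at hfew
  have hUT : #U ≤ 2 * k * #T := by
    have := card_union_le T (T.biUnion (nbhd E))
    nlinarith
  have hUT' : (#U : ℝ) ≤ 2 * k * #T := by exact_mod_cast hUT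
  have hk' : (0 : ℝ) < k := by exact_mod_cast hk
  have hU : (#U : ℝ) ≤ 2 * k * σ := by
    have : (#T : ℝ) ≤ #S := by exact_mod_cast card_le_card hT
    nlinarith
  have hspan : D * #T ≤ #(spannedEdges ω U) := by
    calc D * #T = ∑ _s ∈ T, D := by rw [sum_const, nsmul_eq_mul, mul_comm]
      _ ≤ ∑ s ∈ T, (#{e ∈ E | e.1 = s} : ℝ) := sum_le_sum fun s hs => hdeg s (hT hs)
      _ = #{e ∈ E | e.1 ∈ T} := by rw [← sum_card_fiberwise_eq_card_filter]; push_cast; rfl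
      _ ≤ #(spannedEdges ω U) := by
        exact_mod_cast card_filter_fst_mem_le_card_spannedEdges hSW hE T
  refine (hω U (hTne.mono subset_union_left) hU).not_ge (Nat.ceil_le.2 ?_)
  calc D * #U / (2 * k) ≤ D * (2 * k * #T) / (2 * k) := by gcongr
    _ = D * #T := by field_simp
    _ ≤ _ := hspan

end Expansion

theorem tendsto_measure_one_of_measure_compl_le {ι : Type*} {l : Filter ι} {Ω : ι → Type*}
    [∀ i, MeasurableSpace (Ω i)] {μ : ∀ i, Measure (Ω i)} [∀ i, IsProbabilityMeasure (μ i)]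
    {A : ∀ i, Set (Ω i)} {ε : ι → ℝ≥0∞} (hε : Tendsto ε l (nhds 0))
    (hA : ∀ᶠ i in l, μ i (A i)ᶜ ≤ ε i) :
    Tendsto (fun i => μ i (A i)) l (nhds 1) := by
  have hlower : Tendsto (fun i => 1 - ε i) l (nhds 1) := by
    simpa using ENNReal.Tendsto.sub tendsto_const_nhds hε (Or.inl ENNReal.one_ne_top)
  refine tendsto_of_tendsto_of_tendsto_of_le_of_le' hlower tendsto_const_nhds ?_
    (Eventually.of_forall fun i => prob_le_one)
  filter_upwards [hA] with i hi
  calc 1 - ε i ≤ 1 - μ i (A i)ᶜ := tsub_le_tsub_left hi 1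
    _ ≤ μ i (A i) := by
        rw [tsub_le_iff_right, ← measure_univ (μ := μ i)]
        exact measure_univ_le_add_compl _

theorem eventually_four_mul_exp_one_mul_log_sq_le_rpow :
    ∀ᶠ x : ℝ in atTop, 1 ≤ x ∧ 1 ≤ Real.log x ∧
      4 * Real.exp 1 * Real.log x ^ 2 ≤ x ^ (0.1 : ℝ) := by
  have hc : (0 : ℝ) < (4 * Real.exp 1)⁻¹ := by positivity
  filter_upwards [(isLittleO_log_rpow_rpow_atTop 2 (by norm_num : (0 : ℝ) < 0.1)).bound hc,
    eventually_ge_atTop 1, Real.tendsto_log_atTop.eventually_ge_atTop 1] with x hx hx1 hlog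
  refine ⟨hx1, hlog, ?_⟩
  rw [Real.norm_of_nonneg (by positivity), Real.norm_of_nonneg (by positivity),
    Real.rpow_two] at hx
  rw [← le_inv_mul_iff₀ (by positivity)]
  exact hx

theorem whp_large_star_matching_general
    (p : ℕ → ℝ) (hplo : ∀ n : ℕ, Real.log n / n ≤ p n)
    (hphi : ∀ n : ℕ, p n ≤ 2 * Real.log n / n)
    (γ : ℕ → ℝ) :
    Tendsto (fun n : ℕ => uHyper n 2 (ENNReal.ofReal (p n))
      {ω | ∀ S W : Finset (Fin n), Disjoint S W →
        (S.card : ℝ) ≤ (n : ℝ) / Real.log n ^ (0.9 : ℝ) →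
        (1 - γ n) * n / Real.log (Real.log n) ≤ (W.card : ℝ) →
        (W.card : ℝ) ≤ (1 + γ n) * n / Real.log (Real.log n) →
        ∀ E' : Finset (Fin n × Fin n),
        (∀ e ∈ E', e.1 ∈ S ∧ e.2 ∈ W ∧ uadj ω e.1 e.2) →
        (∀ s ∈ S, Real.log n / (Real.log (Real.log n)) ^ 2 ≤
          ((E'.filter fun e => e.1 = s).card : ℝ)) →
        ∃ M ⊆ E',
          (∀ s ∈ S, (M.filter fun e => e.1 = s).card = ⌈Real.log n ^ (0.2 : ℝ)⌉₊) ∧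
          (∀ w : Fin n, (M.filter fun e => e.2 = w).card ≤ 1)})
      atTop (nhds 1) := by
  have hε : Tendsto (fun n : ℕ => ENNReal.ofReal (2 / Real.log n)) atTop (nhds 0) := by
    simpa using ENNReal.tendsto_ofReal <| tendsto_const_nhds.div_atTop <|
      Real.tendsto_log_atTop.comp tendsto_natCast_atTop_atTop
  refine tendsto_measure_one_of_measure_compl_le hε ?_
  filter_upwards [(Real.tendsto_log_atTop.comp tendsto_natCast_atTop_atTop).eventually
    eventually_four_mul_exp_one_mul_log_sq_le_rpow] with n ⟨hL, hℓ, hℓL⟩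
  have hL02 : 1 ≤ Real.log n ^ (0.2 : ℝ) := Real.one_le_rpow hL (by norm_num)
  have hk1 : 1 ≤ ⌈Real.log n ^ (0.2 : ℝ)⌉₊ := Nat.one_le_ceil_iff.2 (by positivity)
  have hp0 : 0 ≤ p n := (div_nonneg (by positivity) (by positivity)).trans (hplo n)
  refine le_trans (measure_mono <| Set.compl_subset_comm.1 fun ω hω => ?_) <|
    uHyper_not_isSparse_le (by positivity) hℓ hℓL hk1 (Nat.ceil_le_two_mul (by linarith)) hp0
      (hphi n)
  intro S W hSW hS _ _ E hE hdeg
  exact exists_star_matching_of_hall E S _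
    (mul_card_le_card_biUnion_nbhd_of_isSparse hk1 (by positivity) (not_not.1 hω) hSW hS hE hdeg)

/-- Hall-type matching lemma in `G(n,p)`. For
`log n/n ≤ p ≤ 2 log n/n` and `γ(n) → 0`, w.h.p. `G ~ G(n,p)` is such that every
bipartite subgraph `B = (S ∪ W, E')` of `G` with `|S| ≤ n/log^{0.9} n`,
`|W| = (1±γ(n))·n/log log n` and all `S`-degrees at least `log n/(log log n)²`
contains a `⌈log^{0.2} n⌉`-matching from `S` to `W`. -/
theorem whp_large_star_matching
    (p : ℕ → ℝ) (hplo : ∀ n : ℕ, Real.log n / n ≤ p n)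
    (hphi : ∀ n : ℕ, p n ≤ 2 * Real.log n / n)
    (γ : ℕ → ℝ) (hγ0 : ∀ n, 0 < γ n) (hγ1 : ∀ n, γ n < 1)
    (hγ : Tendsto γ atTop (nhds 0)) :
    Tendsto (fun n : ℕ => uHyper n 2 (ENNReal.ofReal (p n))
      {ω | ∀ S W : Finset (Fin n), Disjoint S W →
        (S.card : ℝ) ≤ (n : ℝ) / Real.log n ^ (0.9 : ℝ) →
        (1 - γ n) * n / Real.log (Real.log n) ≤ (W.card : ℝ) →
        (W.card : ℝ) ≤ (1 + γ n) * n / Real.log (Real.log n) →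
        ∀ E' : Finset (Fin n × Fin n),
        (∀ e ∈ E', e.1 ∈ S ∧ e.2 ∈ W ∧ uadj ω e.1 e.2) →
        (∀ s ∈ S, Real.log n / (Real.log (Real.log n)) ^ 2 ≤
          ((E'.filter fun e => e.1 = s).card : ℝ)) →
        ∃ M ⊆ E',
          (∀ s ∈ S, (M.filter fun e => e.1 = s).card = ⌈Real.log n ^ (0.2 : ℝ)⌉₊) ∧
          (∀ w : Fin n, (M.filter fun e => e.2 = w).card ≤ 1)})
      atTop (nhds 1) :=
  whp_large_star_matching_general p hplo hphi γ
end

section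
/- Let 0 < α < ε < 1 be constants, let c = ⌈(1+ε)n⌉ and let p satisfy log n/n ≤ p ≤ 2 log n/n. Then with probability tending to 1 as n→∞, G ~ G_c(n,p) satisfies: for every set of colors 𝒞* ⊆ [c] with |𝒞*| ≥ (1+α)n, the spanning subgraph G[[n]; 𝒞*] consisting of all edges of G whose color lies in 𝒞* is k-rainbow-pseudorandom with k = ⌈n/log^{0.49} n⌉. -/
open MeasureTheory Filter
open scoped ENNReal

/-!
Suppose that for some colour set `C*` with `|C*| ≥ (1+α)n` and disjoint `k`-sets `A, B` fewer
than `n` colours of `C*` appear between `A` and `B`. Then every `A`–`B` edge is absent or has a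
colour in a set `T` (the colours seen, together with those outside `C*`) with `|T| ≤ c - αn`.
For fixed `A, B, T` this has probability at most
`(1 - p αn/c)^{k²} ≤ exp(-α n log^{0.02} n / 3)`,
since `p ≥ log n / n`, `c ≤ 3n` and `k² ≥ n² / log^{0.98} n`, while there are at most
`2^{2n+c} ≤ e^{5n}` triples `(A, B, T)`. The union bound leaves a failure probability of at most
`e^{-n}`.
-/

section Edge

variable {c : ℕ}

lemma edgePMF_none (hc : c ≠ 0) (p : ℝ≥0∞) : edgePMF c p none = 1 - min p 1 := by
  have hp : min p 1 ≠ ⊤ := ne_top_of_le_ne_top ENNReal.one_ne_top (min_le_right p 1)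
  simp [edgePMF, hc, PMF.bernoulli, ENNReal.coe_toNNReal hp]

lemma edgePMF_some (hc : c ≠ 0) (p : ℝ≥0∞) (x : Fin c) :
    edgePMF c p (some x) = min p 1 / c := by
  have hp : min p 1 ≠ ⊤ := ne_top_of_le_ne_top ENNReal.one_ne_top (min_le_right p 1)
  simp [edgePMF, hc, PMF.bernoulli, ENNReal.coe_toNNReal hp, PMF.map_apply, ENNReal.div_eq_inv_mul,
    mul_comm]

lemma edgePMF_toMeasure_insertNone (hc : c ≠ 0) {p : ℝ} (hp : 0 ≤ p) (T : Finset (Fin c)) :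
    (edgePMF c (ENNReal.ofReal p)).toMeasure T.insertNone =
      ENNReal.ofReal (1 - min p 1 * ((c - T.card) / c)) := by
  have hq : min (ENNReal.ofReal p) 1 = ENNReal.ofReal (min p 1) := by
    rw [ENNReal.ofReal_min, ENNReal.ofReal_one]
  have hc' : (0 : ℝ) < c := by positivity
  rw [PMF.toMeasure_apply_finset, Finset.sum_insertNone, edgePMF_none hc,
    Finset.sum_congr rfl fun x _ => edgePMF_some hc _ x, Finset.sum_const, nsmul_eq_mul, hq,
    ← ENNReal.ofReal_one, ← ENNReal.ofReal_sub _ (by positivity), ← ENNReal.ofReal_natCast,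
    ← ENNReal.ofReal_natCast c, ← ENNReal.ofReal_div_of_pos hc',
    ← ENNReal.ofReal_mul (by positivity), ← ENNReal.ofReal_add (by simp) (by positivity)]
  congr 1
  field_simp
  ring

end Edge

instance cHyper.instIsProbabilityMeasure (n k c : ℕ) (p : ℝ≥0∞) :
    IsProbabilityMeasure (cHyper n k c p) := by
  rw [cHyper]; infer_instance

section Graph

variable {n c : ℕ}

def pairEdges (A B : Finset (Fin n)) : Finset (HEdge n 2) :=
  Finset.univ.filter fun e => ∃ a ∈ A, ∃ b ∈ B, e.1 = {a, b}

lemma card_mul_card_le_card_pairEdges {A B : Finset (Fin n)} (hAB : Disjoint A B) :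
    A.card * B.card ≤ (pairEdges A B).card := by
  rw [← Finset.card_product, ← Finset.card_map (Function.Embedding.subtype _)]
  refine Finset.card_le_card_of_injOn (fun ab => {ab.1, ab.2}) ?_ ?_
  · rintro ⟨a, b⟩ hab
    obtain ⟨ha, hb⟩ := Finset.mem_product.mp hab
    have hne : a ≠ b := fun h => Finset.disjoint_left.mp hAB ha (h ▸ hb)
    simp only [Finset.coe_map, Set.mem_image, Finset.mem_coe]
    exact ⟨⟨{a, b}, Finset.card_pair hne⟩,
      Finset.mem_filter.mpr ⟨Finset.mem_univ _, a, ha, b, hb, rfl⟩, rfl⟩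
  · rintro ⟨a, b⟩ hab ⟨a', b'⟩ hab' h
    simp only [Finset.coe_product, Set.mem_prod, Finset.mem_coe] at hab hab' h
    have hd := Finset.disjoint_left.mp hAB
    have ha : a ∈ ({a', b'} : Finset (Fin n)) := h ▸ Finset.mem_insert_self a {b}
    have hb : b ∈ ({a', b'} : Finset (Fin n)) :=
      h ▸ Finset.mem_insert_of_mem (Finset.mem_singleton_self b)
    simp only [Finset.mem_insert, Finset.mem_singleton] at ha hb
    rcases ha with rfl | rfl
    · rcases hb with rfl | rfl
      · exact absurd hab.2 (hd hab'.1)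
      · rfl
    · exact absurd hab'.2 (hd hab.1)

def crossColorsIn (A B : Finset (Fin n)) (T : Finset (Fin c)) : Set (CSample n 2 c) :=
  (pairEdges A B : Set (HEdge n 2)).pi fun _ => T.insertNone

lemma cHyper_crossColorsIn (p : ℝ≥0∞) (A B : Finset (Fin n)) (T : Finset (Fin c)) :
    cHyper n 2 c p (crossColorsIn A B T) =
      (edgePMF c p).toMeasure T.insertNone ^ (pairEdges A B).card := by
  rw [cHyper, crossColorsIn, Measure.pi_pi_finset, Finset.prod_const]

def crossColors (ω : CSample n 2 c) (A B : Finset (Fin n)) : Finset (Fin c) :=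
  Finset.univ.filter fun x => ∃ a ∈ A, ∃ b ∈ B, col ω a b = some x

lemma mem_crossColorsIn_crossColors (ω : CSample n 2 c) {A B : Finset (Fin n)}
    (hAB : Disjoint A B) : ω ∈ crossColorsIn A B (crossColors ω A B) := by
  intro e he
  obtain ⟨a, ha, b, hb, hab⟩ := (Finset.mem_filter.mp he).2
  have hne : a ≠ b := fun h => Finset.disjoint_left.mp hAB ha (h ▸ hb)
  have hcol : col ω a b = ω e := by
    rw [col, dif_neg hne]; exact congrArg ω (Subtype.ext hab.symm)
  refine Finset.mem_insertNone.mpr fun x hx => ?_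
  exact Finset.mem_filter.mpr ⟨Finset.mem_univ x, a, ha, b, hb, hcol.trans hx⟩

end Graph

section Rainbow

variable {n c : ℕ}

def IsRainbowPseudorandom (ω : CSample n 2 c) (Cstar : Finset (Fin c)) (k : ℕ) : Prop :=
  ∀ A B : Finset (Fin n), Disjoint A B → A.card = k → B.card = k →
    n ≤ (Cstar.filter fun x => ∃ a ∈ A, ∃ b ∈ B, col ω a b = some x).card

lemma exists_crossColorsIn_of_not_isRainbowPseudorandom {ω : CSample n 2 c}
    {Cstar : Finset (Fin c)} {k : ℕ} (h : ¬ IsRainbowPseudorandom ω Cstar k) :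
    ∃ A B : Finset (Fin n), ∃ T : Finset (Fin c), Disjoint A B ∧ A.card = k ∧ B.card = k ∧
      T.card + Cstar.card < n + c ∧ ω ∈ crossColorsIn A B T := by
  simp only [IsRainbowPseudorandom, not_forall, not_le] at h
  obtain ⟨A, B, hAB, hA, hB, hfew⟩ := h
  refine ⟨A, B, crossColors ω A B, hAB, hA, hB, ?_, mem_crossColorsIn_crossColors ω hAB⟩
  have hsub : crossColors ω A B ⊆
      Cstar.filter (fun x => ∃ a ∈ A, ∃ b ∈ B, col ω a b = some x) ∪ Cstarᶜ := by
    intro x hx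
    have hx' := (Finset.mem_filter.mp hx).2
    by_cases hxC : x ∈ Cstar
    · exact Finset.mem_union_left _ (Finset.mem_filter.mpr ⟨hxC, hx'⟩)
    · exact Finset.mem_union_right _ (Finset.mem_compl.mpr hxC)
  have hcompl : Cstarᶜ.card + Cstar.card = c := by
    rw [Finset.card_compl_add_card, Fintype.card_fin]
  have := (Finset.card_le_card hsub).trans (Finset.card_union_le _ _)
  omega

lemma cHyper_crossColorsIn_le (hc : c ≠ 0) {p d : ℝ} (hp : 0 ≤ p) {k : ℕ}
    {A B : Finset (Fin n)} {T : Finset (Fin c)} (hAB : Disjoint A B) (hA : A.card = k)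
    (hB : B.card = k) (hT : T.card + d ≤ c) :
    cHyper n 2 c (ENNReal.ofReal p) (crossColorsIn A B T) ≤
      ENNReal.ofReal (1 - min p 1 * (d / c)) ^ (k * k) := by
  rw [cHyper_crossColorsIn, edgePMF_toMeasure_insertNone hc hp]
  have hle_one : ENNReal.ofReal (1 - min p 1 * ((c - T.card) / c)) ≤ 1 := by
    rw [← edgePMF_toMeasure_insertNone hc hp T]; exact prob_le_one
  have hkk : k * k ≤ (pairEdges A B).card := by
    simpa only [hA, hB] using card_mul_card_le_card_pairEdges hAB
  have hdeficit : min p 1 * (d / c) ≤ min p 1 * ((c - T.card) / c) := by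
    gcongr
    linarith
  calc ENNReal.ofReal (1 - min p 1 * ((c - T.card) / c)) ^ (pairEdges A B).card
      ≤ ENNReal.ofReal (1 - min p 1 * ((c - T.card) / c)) ^ (k * k) :=
        pow_le_pow_of_le_one zero_le hle_one hkk
    _ ≤ ENNReal.ofReal (1 - min p 1 * (d / c)) ^ (k * k) := by gcongr

def someCrossColorsIn (n c k : ℕ) (d : ℝ) : Set (CSample n 2 c) :=
  {ω | ∃ A B : Finset (Fin n), ∃ T : Finset (Fin c),
    Disjoint A B ∧ A.card = k ∧ B.card = k ∧ T.card + d ≤ c ∧ ω ∈ crossColorsIn A B T}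

lemma compl_setOf_isRainbowPseudorandom_subset (k : ℕ) (α : ℝ) :
    {ω : CSample n 2 c | ∀ Cstar : Finset (Fin c),
      (1 + α) * n ≤ (Cstar.card : ℝ) → IsRainbowPseudorandom ω Cstar k}ᶜ ⊆
      someCrossColorsIn n c k (α * n) := by
  intro ω hω
  simp only [Set.mem_compl_iff, Set.mem_setOf_eq, not_forall] at hω
  obtain ⟨Cstar, hCstar, hnot⟩ := hω
  obtain ⟨A, B, T, hAB, hA, hB, hT, hmem⟩ :=
    exists_crossColorsIn_of_not_isRainbowPseudorandom hnot
  refine ⟨A, B, T, hAB, hA, hB, ?_, hmem⟩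
  have : (T.card : ℝ) + Cstar.card + 1 ≤ n + c := by exact_mod_cast hT
  linarith

lemma cHyper_someCrossColorsIn_le (hc : c ≠ 0) {p d : ℝ} (hp : 0 ≤ p) (hd0 : 0 ≤ d)
    (hdc : d ≤ c) (k : ℕ) :
    cHyper n 2 c (ENNReal.ofReal p) (someCrossColorsIn n c k d) ≤
      ENNReal.ofReal (2 ^ (2 * n + c) * (1 - min p 1 * (d / c)) ^ (k * k)) := by
  set triples :=
    (Finset.univ : Finset (Finset (Fin n) × Finset (Fin n) × Finset (Fin c))).filter fun x =>
      Disjoint x.1 x.2.1 ∧ x.1.card = k ∧ x.2.1.card = k ∧ x.2.2.card + d ≤ c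
  have hσ : 0 ≤ 1 - min p 1 * (d / c) := by
    have : min p 1 * (d / c) ≤ 1 :=
      mul_le_one₀ (min_le_right p 1) (by positivity) (div_le_one_of_le₀ hdc (by positivity))
    linarith
  have hcard : (triples.card : ℝ) ≤ 2 ^ (2 * n + c) := by
    have : triples.card ≤ 2 ^ (2 * n + c) := (Finset.card_le_univ triples).trans_eq
      (by simp only [Fintype.card_prod, Fintype.card_finset, Fintype.card_fin]; ring)
    exact_mod_cast this
  calc _ ≤ cHyper n 2 c (ENNReal.ofReal p)
        (⋃ x ∈ triples, crossColorsIn x.1 x.2.1 x.2.2) := by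
        refine measure_mono ?_
        rintro ω ⟨A, B, T, hAB, hA, hB, hT, hω⟩
        exact Set.mem_biUnion (x := (A, B, T)) (by simp [triples, hAB, hA, hB, hT]) hω
    _ ≤ ∑ x ∈ triples, cHyper n 2 c (ENNReal.ofReal p) (crossColorsIn x.1 x.2.1 x.2.2) :=
        measure_biUnion_finset_le _ _
    _ ≤ ∑ _x ∈ triples, ENNReal.ofReal ((1 - min p 1 * (d / c)) ^ (k * k)) := by
        refine Finset.sum_le_sum fun x hx => ?_
        obtain ⟨hAB, hA, hB, hT⟩ := (Finset.mem_filter.mp hx).2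
        rw [ENNReal.ofReal_pow hσ]
        exact cHyper_crossColorsIn_le hc hp hAB hA hB hT
    _ ≤ ENNReal.ofReal (2 ^ (2 * n + c) * (1 - min p 1 * (d / c)) ^ (k * k)) := by
        rw [Finset.sum_const, nsmul_eq_mul, ← ENNReal.ofReal_natCast,
          ← ENNReal.ofReal_mul (by positivity)]
        gcongr

end Rainbow

lemma two_pow_mul_one_sub_pow_le_exp_neg {n c N : ℕ} {x : ℝ} (hc : c ≤ 3 * n) (hx1 : x ≤ 1)
    (hxN : 6 * n ≤ x * N) : (2 : ℝ) ^ (2 * n + c) * (1 - x) ^ N ≤ Real.exp (-n) := by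
  have htwo : (2 : ℝ) ^ (2 * n + c) ≤ Real.exp (5 * n) :=
    calc (2 : ℝ) ^ (2 * n + c) ≤ 2 ^ (5 * n) := pow_le_pow_right₀ (by norm_num) (by omega)
      _ ≤ Real.exp 1 ^ (5 * n) := by
        gcongr; linarith [Real.add_one_le_exp (1 : ℝ)]
      _ = Real.exp (5 * n) := by rw [← Real.exp_nat_mul]; push_cast; ring_nf
  have hpow : (1 - x) ^ N ≤ Real.exp (-(x * N)) :=
    calc (1 - x) ^ N ≤ Real.exp (-x) ^ N :=
          pow_le_pow_left₀ (by linarith) (Real.one_sub_le_exp_neg x) N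
      _ = Real.exp (-(x * N)) := by rw [← Real.exp_nat_mul]; ring_nf
  calc (2 : ℝ) ^ (2 * n + c) * (1 - x) ^ N ≤ Real.exp (5 * n) * Real.exp (-(x * N)) := by
        gcongr
    _ ≤ Real.exp (-n) := by rw [← Real.exp_add]; gcongr; linarith

lemma mul_rpow_le_div_mul_ceil_sq {L y : ℝ} (hL : 0 < L) (hy : 0 < y) (r : ℝ) :
    y * L ^ (1 - 2 * r) ≤ L / y * (⌈y / L ^ r⌉₊ : ℝ) ^ 2 := by
  calc y * L ^ (1 - 2 * r) = L / y * (y / L ^ r) ^ 2 := by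
        rw [Real.rpow_sub hL, Real.rpow_one, mul_comm 2 r, Real.rpow_mul hL.le, Real.rpow_two]
        field_simp
    _ ≤ L / y * (⌈y / L ^ r⌉₊ : ℝ) ^ 2 := by gcongr; exact Nat.le_ceil _

lemma mul_le_ceil_one_add_mul {α ε : ℝ} (h : α ≤ 1 + ε) (n : ℕ) :
    α * n ≤ ⌈(1 + ε) * n⌉₊ :=
  (mul_le_mul_of_nonneg_right h n.cast_nonneg).trans (Nat.le_ceil _)

lemma eventually_two_pow_mul_pow_le_exp_neg {α ε : ℝ} (hα0 : 0 < α) (hαε : α < ε)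
    (hε1 : ε < 1) :
    ∀ᶠ n : ℕ in atTop, ∀ q : ℝ, Real.log n / n ≤ q → q ≤ 1 →
      (2 : ℝ) ^ (2 * n + ⌈(1 + ε) * n⌉₊) *
          (1 - q * (α * n / ⌈(1 + ε) * n⌉₊)) ^
            (⌈(n : ℝ) / Real.log n ^ (0.49 : ℝ)⌉₊ *
              ⌈(n : ℝ) / Real.log n ^ (0.49 : ℝ)⌉₊) ≤
        Real.exp (-n) := by
  have hlog : Tendsto (fun n : ℕ => α * Real.log n ^ (0.02 : ℝ)) atTop atTop :=
    ((tendsto_rpow_atTop (by norm_num)).comp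
      (Real.tendsto_log_atTop.comp tendsto_natCast_atTop_atTop)).const_mul_atTop hα0
  filter_upwards [eventually_ge_atTop 2, hlog.eventually_ge_atTop 18] with n hn hlarge q hq hq1
  set c := ⌈(1 + ε) * n⌉₊
  set k := ⌈(n : ℝ) / Real.log n ^ (0.49 : ℝ)⌉₊
  have hn0 : (0 : ℝ) < n := by positivity
  have hL : 0 < Real.log n := Real.log_pos (by exact_mod_cast hn)
  have hc3 : c ≤ 3 * n := Nat.ceil_le.mpr (by push_cast; nlinarith)
  have hαc : α * n ≤ c := mul_le_ceil_one_add_mul (by linarith) n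
  have hc0 : (0 : ℝ) < c := (by positivity : (0 : ℝ) < α * n).trans_le hαc
  refine two_pow_mul_one_sub_pow_le_exp_neg hc3
    (mul_le_one₀ hq1 (by positivity) (div_le_one_of_le₀ hαc hc0.le)) ?_
  have hrate : α / 3 * (Real.log n / n) ≤ q * (α * n / c) := by
    have hα3 : α / 3 ≤ α * n / c := by
      rw [div_le_div_iff₀ (by norm_num) hc0]
      have : (c : ℝ) ≤ 3 * n := by exact_mod_cast hc3
      nlinarith
    rw [mul_comm q]
    exact mul_le_mul hα3 hq (by positivity) (by positivity)
  have hk : n * Real.log n ^ (0.02 : ℝ) ≤ Real.log n / n * (k : ℝ) ^ 2 := by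
    convert mul_rpow_le_div_mul_ceil_sq hL hn0 0.49 using 3
    norm_num
  calc (6 * n : ℝ) ≤ α / 3 * (n * Real.log n ^ (0.02 : ℝ)) := by nlinarith
    _ ≤ α / 3 * (Real.log n / n * (k : ℝ) ^ 2) := by gcongr
    _ = α / 3 * (Real.log n / n) * ((k * k : ℕ) : ℝ) := by push_cast; ring
    _ ≤ q * (α * n / c) * ((k * k : ℕ) : ℝ) := by gcongr

lemma tendsto_measure_nhds_one_of_compl_le {ι : Type*} {l : Filter ι} {Ω : ι → Type*}
    [∀ i, MeasurableSpace (Ω i)] (μ : ∀ i, Measure (Ω i))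
    [∀ i, IsProbabilityMeasure (μ i)] (s : ∀ i, Set (Ω i)) {b : ι → ℝ≥0∞}
    (hb : Tendsto b l (nhds 0)) (h : ∀ᶠ i in l, μ i (s i)ᶜ ≤ b i) :
    Tendsto (fun i => μ i (s i)) l (nhds 1) := by
  have hlower : Tendsto (fun i => 1 - b i) l (nhds 1) := by
    simpa using ENNReal.Tendsto.sub tendsto_const_nhds hb (Or.inl ENNReal.one_ne_top)
  refine tendsto_of_tendsto_of_tendsto_of_le_of_le' hlower tendsto_const_nhds ?_
    (Eventually.of_forall fun i => prob_le_one)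
  filter_upwards [h] with i hi
  refine tsub_le_iff_right.mpr ?_
  calc 1 = μ i Set.univ := measure_univ.symm
    _ ≤ μ i (s i) + μ i (s i)ᶜ := measure_univ_le_add_compl _
    _ ≤ μ i (s i) + b i := by gcongr

theorem whp_rainbow_pseudorandom_general (α ε : ℝ) (hα0 : 0 < α) (hαε : α < ε) (hε1 : ε < 1)
    (p : ℕ → ℝ) (hplo : ∀ n : ℕ, Real.log n / n ≤ p n) :
    Tendsto (fun n : ℕ => cHyper n 2 ⌈(1 + ε) * n⌉₊ (ENNReal.ofReal (p n))
      {ω | ∀ Cstar : Finset (Fin ⌈(1 + ε) * n⌉₊),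
        (1 + α) * n ≤ (Cstar.card : ℝ) →
        ∀ A B : Finset (Fin n), Disjoint A B →
        A.card = ⌈(n : ℝ) / Real.log n ^ (0.49 : ℝ)⌉₊ →
        B.card = ⌈(n : ℝ) / Real.log n ^ (0.49 : ℝ)⌉₊ →
        n ≤ (Cstar.filter fun x => ∃ a ∈ A, ∃ b ∈ B, col ω a b = some x).card})
      atTop (nhds 1) := by
  have hexp : Tendsto (fun n : ℕ => ENNReal.ofReal (Real.exp (-n))) atTop (nhds 0) := by
    simpa [Function.comp_def] using (ENNReal.continuous_ofReal.tendsto 0).comp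
      (Real.tendsto_exp_neg_atTop_nhds_zero.comp tendsto_natCast_atTop_atTop)
  refine tendsto_measure_nhds_one_of_compl_le _ _ hexp ?_
  filter_upwards [eventually_two_pow_mul_pow_le_exp_neg hα0 hαε hε1, eventually_gt_atTop 0]
    with n hbound hn
  have hp : 0 ≤ p n := (by positivity : 0 ≤ Real.log n / n).trans (hplo n)
  have hαc := mul_le_ceil_one_add_mul (by linarith : α ≤ 1 + ε) n
  have hc : ⌈(1 + ε) * n⌉₊ ≠ 0 :=
    Nat.cast_ne_zero.mp ((by positivity : (0 : ℝ) < α * n).trans_le hαc).ne'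
  have hq : Real.log n / n ≤ min (p n) 1 :=
    le_min (hplo n) (div_le_one_of_le₀ (Real.log_le_self n.cast_nonneg) n.cast_nonneg)
  exact (measure_mono (compl_setOf_isRainbowPseudorandom_subset _ α)).trans
    ((cHyper_someCrossColorsIn_le hc hp (by positivity) hαc _).trans
      (ENNReal.ofReal_le_ofReal (hbound _ hq (min_le_right _ _))))

/-- For constants `0 < α < ε < 1`, `c = ⌈(1+ε)n⌉` colors and
`log n/n ≤ p ≤ 2 log n/n`, w.h.p. `G ~ G_c(n,p)` is such that for every color set
`C*` of size at least `(1+α)n`, the subgraph `G[[n]; C*]` is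
`k`-rainbow-pseudorandom with `k = ⌈n/log^{0.49} n⌉`: between any two disjoint
vertex sets of size `k` at least `n` distinct colors from `C*` appear. -/
theorem whp_rainbow_pseudorandom (α ε : ℝ) (hα0 : 0 < α) (hαε : α < ε) (hε1 : ε < 1)
    (p : ℕ → ℝ) (hplo : ∀ n : ℕ, Real.log n / n ≤ p n)
    (hphi : ∀ n : ℕ, p n ≤ 2 * Real.log n / n) :
    Tendsto (fun n : ℕ => cHyper n 2 ⌈(1 + ε) * n⌉₊ (ENNReal.ofReal (p n))
      {ω | ∀ Cstar : Finset (Fin ⌈(1 + ε) * n⌉₊),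
        (1 + α) * n ≤ (Cstar.card : ℝ) →
        ∀ A B : Finset (Fin n), Disjoint A B →
        A.card = ⌈(n : ℝ) / Real.log n ^ (0.49 : ℝ)⌉₊ →
        B.card = ⌈(n : ℝ) / Real.log n ^ (0.49 : ℝ)⌉₊ →
        n ≤ (Cstar.filter fun x => ∃ a ∈ A, ∃ b ∈ B, col ω a b = some x).card})
      atTop (nhds 1) :=
  whp_rainbow_pseudorandom_general α ε hα0 hαε hε1 p hplo
end

section
/- Let G be a graph, let m > 1 be an integer, and let k be a positive integer. Let S ⊆ V(G) be a set of vertices for which there exists an m-matching from S to V(G)∖S, i.e., a subgraph M of G, all of whose edges join S to V(G)∖S, in which every vertex of S has exactly m neighbors in V(G)∖S and every vertex of V(G)∖S has degree at most 1. If the induced subgraph G[V(G)∖S] is a (k,m)-expander, then G is a (k,(m−1)/2)-expander. -/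
open Filter
open scoped Classical

/-- adding vertex-disjoint stars to an expander. Let `G` be a
graph, `m > 1`, `k ≥ 1`, and let `S` be a vertex set admitting an `m`-matching into
`V(G) ∖ S` (a set `M` of edges of `G` from `S` to `V(G) ∖ S` in which every vertex
of `S` lies in exactly `m` edges and every vertex outside `S` in at most one). If
the induced subgraph `G[V(G) ∖ S]` is a `(k, m)`-expander then `G` is a
`(k, (m-1)/2)`-expander. -/
theorem expander_plus_stars (V : Type) [Fintype V] [DecidableEq V]
    (G : SimpleGraph V) [DecidableRel G.Adj]
    (m : ℕ) (hm : 1 < m) (k : ℕ) (hk : 0 < k) (S : Finset V)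
    (M : Finset (V × V))
    (hM1 : ∀ e ∈ M, e.1 ∈ S ∧ e.2 ∉ S ∧ G.Adj e.1 e.2)
    (hM2 : ∀ s ∈ S, (M.filter fun e => e.1 = s).card = m)
    (hM3 : ∀ w : V, (M.filter fun e => e.2 = w).card ≤ 1)
    (hexp : ∀ X : Finset V, (∀ x ∈ X, x ∉ S) → X.card ≤ k →
      m * X.card ≤
        (Finset.univ.filter fun w => w ∉ S ∧ w ∉ X ∧ ∃ u ∈ X, G.Adj u w).card) :
    ∀ X : Finset V, X.card ≤ k →
      ((m : ℝ) - 1) / 2 * X.card ≤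
        ((Finset.univ.filter fun w => w ∉ X ∧ ∃ u ∈ X, G.Adj u w).card : ℝ) := by
  intro X hXk
  set N := (Finset.univ.filter fun w => w ∉ X ∧ ∃ u ∈ X, G.Adj u w) with hN
  set A := X.filter (· ∈ S) with hA
  set B := X.filter (· ∉ S) with hB
  have hAB : A.card + B.card = X.card := Finset.card_filter_add_card_filter_not _
  -- expander claim on B
  have hBk : B.card ≤ k := le_trans (Finset.card_filter_le _ _) hXk
  have hBnotS : ∀ x ∈ B, x ∉ S := fun x hx => (Finset.mem_filter.mp hx).2
  have h1 := hexp B hBnotS hBk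
  have hNB : m * B.card ≤ N.card := by
    refine le_trans h1 (Finset.card_le_card ?_)
    intro w hw
    simp only [hN, Finset.mem_filter, Finset.mem_univ, true_and] at hw ⊢
    obtain ⟨hwS, hwB, u, huB, hadj⟩ := hw
    exact ⟨fun hwX => hwB (Finset.mem_filter.mpr ⟨hwX, hwS⟩),
      u, (Finset.mem_filter.mp huB).1, hadj⟩
  -- matching claim on A
  set MA := M.filter (fun e => e.1 ∈ A) with hMA
  have hMAcard : MA.card = m * A.card := by
    have : MA = A.biUnion (fun s => M.filter fun e => e.1 = s) := by
      ext e
      simp only [hMA, Finset.mem_filter, Finset.mem_biUnion]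
      constructor
      · rintro ⟨he, h1⟩; exact ⟨e.1, h1, he, rfl⟩
      · rintro ⟨s, hs, he, rfl⟩; exact ⟨he, hs⟩
    rw [this, Finset.card_biUnion, Finset.sum_congr rfl
      (fun s hs => hM2 s (Finset.mem_filter.mp hs).2), Finset.sum_const, smul_eq_mul,
      Nat.mul_comm]
    intro s hs t ht hst
    simp only [Finset.disjoint_left, Finset.mem_filter]
    rintro e ⟨-, rfl⟩ ⟨-, h⟩
    exact hst h
  set T := MA.image Prod.snd with hT
  have hTcard : T.card = m * A.card := by
    rw [hT, Finset.card_image_of_injOn, hMAcard]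
    intro e he f hf hef
    have he' : e ∈ M := Finset.mem_of_mem_filter _ he
    have hf' : f ∈ M := Finset.mem_of_mem_filter _ hf
    have h2 := Finset.card_le_one.mp (hM3 e.2)
    exact h2 e (Finset.mem_filter.mpr ⟨he', rfl⟩) f (Finset.mem_filter.mpr ⟨hf', hef.symm⟩)
  have hTS : ∀ w ∈ T, w ∉ S := by
    intro w hw
    obtain ⟨e, he, rfl⟩ := Finset.mem_image.mp hw
    exact (hM1 e (Finset.mem_of_mem_filter _ he)).2.1
  have hTXB : T ∩ X ⊆ B := by
    intro w hw
    have hw1 := Finset.mem_inter.mp hw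
    exact Finset.mem_filter.mpr ⟨hw1.2, hTS w hw1.1⟩
  have hTdN : T \ X ⊆ N := by
    intro w hw
    obtain ⟨hwT, hwX⟩ := Finset.mem_sdiff.mp hw
    obtain ⟨e, he, rfl⟩ := Finset.mem_image.mp hwT
    have he' := Finset.mem_filter.mp he
    refine Finset.mem_filter.mpr ⟨Finset.mem_univ _, hwX, e.1,
      (Finset.mem_filter.mp he'.2).1, (hM1 e he'.1).2.2⟩
  have hNA : m * A.card ≤ N.card + B.card := by
    calc m * A.card = T.card := hTcard.symm
    _ = (T ∩ X).card + (T \ X).card := (Finset.card_inter_add_card_sdiff T X).symm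
    _ ≤ B.card + N.card :=
        Nat.add_le_add (Finset.card_le_card hTXB) (Finset.card_le_card hTdN)
    _ = N.card + B.card := Nat.add_comm _ _
  -- arithmetic
  have c1 : (m : ℝ) * B.card ≤ N.card := by exact_mod_cast hNB
  have c2 : (m : ℝ) * A.card ≤ N.card + B.card := by exact_mod_cast hNA
  have c3 : (A.card : ℝ) + B.card = X.card := by exact_mod_cast hAB
  have hm1 : (1 : ℝ) ≤ m := by exact_mod_cast hm.le
  have hA0 : (0 : ℝ) ≤ A.card := Nat.cast_nonneg _
  nlinarith [c1, c2, c3, hA0]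
end
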